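/- Let (G, ω, τ) be a weighted graph where τ is degenerate, with degeneracy ordering u₁, …, uₙ (so τ(uᵢ) ≥ ∑ ω(e) over edges between uᵢ and earlier vertices). Define S = {uᵢ : τ(uᵢ) > ∑_{e ∈ E(uᵢ,R)} ω(e)}, where E(uᵢ,R) is the set of edges between uᵢ and {u₁,…,u_{i−1}}. Then S is a target set for (G, ω, τ): activating S activates the entire graph. -/

import Mathlib

open Finset

variable {V : Type*}

/-- Total weight of edges between `x` and active set `A`. -/
def Influence [Fintype V] [DecidableEq V] (G : SimpleGraph V) [DecidableRel G.Adj]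
    (ω : Sym2 V → ℚ) (A : Finset V) (x : V) : ℚ :=
  ∑ y ∈ A.filter (G.Adj x), ω s(x, y)

/-- Weighted activation process started from `A₀`. -/
def ActiveW [Fintype V] [DecidableEq V] (G : SimpleGraph V) [DecidableRel G.Adj]
    (ω : Sym2 V → ℚ) (τ : V → ℚ) (A₀ : Finset V) : ℕ → Finset V
  | 0 => A₀
  | t + 1 => ActiveW G ω τ A₀ t ∪
      Finset.univ.filter (fun x => τ x ≤ Influence G ω (ActiveW G ω τ A₀ t) x)

/-- `A₀` is a target set (dynamic monopoly): every vertex eventually activates. -/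
def IsTargetSetW [Fintype V] [DecidableEq V] (G : SimpleGraph V) [DecidableRel G.Adj]
    (ω : Sym2 V → ℚ) (τ : V → ℚ) (A₀ : Finset V) : Prop :=
  ∀ v : V, ∃ t, v ∈ ActiveW G ω τ A₀ t

/-- Incentive activation process for incentive assignment `p`. -/
def ActiveP [Fintype V] [DecidableEq V] (G : SimpleGraph V) [DecidableRel G.Adj]
    (ω : Sym2 V → ℚ) (τ : V → ℚ) (p : V → ℚ) : ℕ → Finset V
  | 0 => Finset.univ.filter (fun v => τ v ≤ p v)
  | t + 1 => ActiveP G ω τ p t ∪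
      Finset.univ.filter (fun x => τ x ≤ Influence G ω (ActiveP G ω τ p t) x + p x)

/-- `p` is a target vector: its incentive process activates every vertex. -/
def IsTargetVector [Fintype V] [DecidableEq V] (G : SimpleGraph V) [DecidableRel G.Adj]
    (ω : Sym2 V → ℚ) (τ : V → ℚ) (p : V → ℚ) : Prop :=
  ∀ v : V, ∃ t, v ∈ ActiveP G ω τ p t

/-- `τ` is a degenerate threshold assignment: every nonempty induced subgraph
(given by its vertex set `S`) has a vertex whose threshold is at least the total
weight of the edges of the induced subgraph incident to it. -/
def DegenerateW [Fintype V] [DecidableEq V] (G : SimpleGraph V) [DecidableRel G.Adj]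
    (ω : Sym2 V → ℚ) (τ : V → ℚ) : Prop :=
  ∀ S : Finset V, S.Nonempty → ∃ x ∈ S, Influence G ω S x ≤ τ x

/-- `u` is a degeneracy ordering: each vertex's threshold is at least the total
weight of edges to earlier vertices. -/
def IsDegOrder [Fintype V] [DecidableEq V] (G : SimpleGraph V) [DecidableRel G.Adj]
    (ω : Sym2 V → ℚ) (τ : V → ℚ) (u : Fin (Fintype.card V) ≃ V) : Prop :=
  ∀ i, (∑ j ∈ Finset.univ.filter (fun j => j < i ∧ G.Adj (u i) (u j)), ω s(u i, u j)) ≤ τ (u i)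

/-- Unweighted activation process. -/
def ActiveU [Fintype V] [DecidableEq V] (G : SimpleGraph V) [DecidableRel G.Adj]
    (τ : V → ℕ) (A₀ : Finset V) : ℕ → Finset V
  | 0 => A₀
  | t + 1 => ActiveU G τ A₀ t ∪
      Finset.univ.filter (fun x => τ x ≤ ((ActiveU G τ A₀ t).filter (G.Adj x)).card)

def IsTargetSetU [Fintype V] [DecidableEq V] (G : SimpleGraph V) [DecidableRel G.Adj]
    (τ : V → ℕ) (A₀ : Finset V) : Prop :=
  ∀ v : V, ∃ t, v ∈ ActiveU G τ A₀ t

/-! Order the vertices by `u`. A vertex outside the seed set has threshold at most the weight of its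
edges to earlier vertices, so by strong induction `u i` is active by round `i + 1`. -/

section

variable [Fintype V] [DecidableEq V] {G : SimpleGraph V} [DecidableRel G.Adj]
  {ω : Sym2 V → ℚ} {τ : V → ℚ} {A₀ : Finset V}

theorem activeW_mono : Monotone (ActiveW G ω τ A₀) :=
  monotone_nat_of_le_succ fun _ => subset_union_left

theorem subset_activeW (t : ℕ) : A₀ ⊆ ActiveW G ω τ A₀ t :=
  activeW_mono (Nat.zero_le t)

theorem mem_activeW_succ {t : ℕ} {x : V} (h : τ x ≤ Influence G ω (ActiveW G ω τ A₀ t) x) :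
    x ∈ ActiveW G ω τ A₀ (t + 1) :=
  mem_union_right _ (mem_filter.2 ⟨mem_univ _, h⟩)

theorem influence_mono (hω : ∀ e ∈ G.edgeSet, 0 ≤ ω e) {A B : Finset V} (h : A ⊆ B) (x : V) :
    Influence G ω A x ≤ Influence G ω B x :=
  sum_le_sum_of_subset_of_nonneg (filter_subset_filter _ h) fun _ hy _ =>
    hω _ (mem_filter.1 hy).2

theorem influence_map_Iio {n : ℕ} (u : Fin n ≃ V) (i : Fin n) :
    Influence G ω ((Iio i).map u.toEmbedding) (u i) =
      ∑ j ∈ univ.filter (fun j => j < i ∧ G.Adj (u i) (u j)), ω s(u i, u j) := by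
  rw [Influence, filter_map, sum_map]
  refine sum_congr ?_ fun _ _ => rfl
  ext j
  simp

theorem isTargetSetW_of_ordering (hω : ∀ e ∈ G.edgeSet, 0 ≤ ω e)
    {n : ℕ} (u : Fin n ≃ V)
    (hA : ∀ i, Influence G ω ((Iio i).map u.toEmbedding) (u i) < τ (u i) → u i ∈ A₀) :
    IsTargetSetW G ω τ A₀ := by
  have active : ∀ i : Fin n, u i ∈ ActiveW G ω τ A₀ (i + 1) := by
    intro i
    induction i using WellFoundedLT.induction with
    | ind i ih =>
      by_cases hlt : Influence G ω ((Iio i).map u.toEmbedding) (u i) < τ (u i)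
      · exact subset_activeW _ (hA i hlt)
      · have earlier_active : (Iio i).map u.toEmbedding ⊆ ActiveW G ω τ A₀ i := by
          simp only [subset_iff, mem_map, mem_Iio, Equiv.toEmbedding_apply]
          rintro _ ⟨j, hj, rfl⟩
          exact activeW_mono (Nat.succ_le_of_lt hj) (ih j hj)
        exact mem_activeW_succ ((not_lt.1 hlt).trans (influence_mono hω earlier_active _))
  intro v
  exact ⟨_, u.apply_symm_apply v ▸ active (u.symm v)⟩

end

theorem strict_vertices_isTargetSet_general [Fintype V] [DecidableEq V] (G : SimpleGraph V)
    [DecidableRel G.Adj] (ω : Sym2 V → ℚ) (τ : V → ℚ)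
    (hω : ∀ e ∈ G.edgeSet, 0 ≤ ω e)
    (u : Fin (Fintype.card V) ≃ V) :
    IsTargetSetW G ω τ
      ((Finset.univ.filter (fun i : Fin (Fintype.card V) =>
        (∑ j ∈ Finset.univ.filter (fun j => j < i ∧ G.Adj (u i) (u j)), ω s(u i, u j))
          < τ (u i))).image u) :=
  isTargetSetW_of_ordering (G := G) hω u fun i hi =>
    mem_image_of_mem u (mem_filter.2 ⟨mem_univ i, influence_map_Iio (G := G) u i ▸ hi⟩)

/-- the vertices where the degeneracy-ordering inequality is strict
form a target set. -/
theorem strict_vertices_isTargetSet [Fintype V] [DecidableEq V] (G : SimpleGraph V)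
    [DecidableRel G.Adj] (ω : Sym2 V → ℚ) (τ : V → ℚ)
    (hω : ∀ e ∈ G.edgeSet, 0 ≤ ω e)
    (u : Fin (Fintype.card V) ≃ V) (hu : IsDegOrder G ω τ u) :
    IsTargetSetW G ω τ
      ((Finset.univ.filter (fun i : Fin (Fintype.card V) =>
        (∑ j ∈ Finset.univ.filter (fun j => j < i ∧ G.Adj (u i) (u j)), ω s(u i, u j))
          < τ (u i))).image u) :=
  strict_vertices_isTargetSet_general G ω τ hω u
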